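/- For every positive integer m, the m-book graph B_m (the Cartesian product of the star K_{1,m} with the path P_2) belongs to G^cs: s(B_m,w) = cs(B_m,w) for every positive weight function w. -/

import Mathlib

open SimpleGraph
open scoped Classical

variable {V : Type*} [Fintype V]

noncomputable def setWeight (w : V → ℝ) (A : Set V) : ℝ :=
  ∑ v : V, if v ∈ A then w v else 0

def IsComponentOf (G : SimpleGraph V) (S C : Set V) : Prop :=
  ∃ c : (G.induce S).ConnectedComponent,
    C = Subtype.val '' {x : ↥S | (G.induce S).connectedComponentMk x = c}

def Touches (G : SimpleGraph V) (C D : Set V) : Prop :=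
  ∃ a ∈ C, ∃ b ∈ D, G.Adj a b

def IsSafeSet (G : SimpleGraph V) (w : V → ℝ) (S : Set V) : Prop :=
  S.Nonempty ∧ S ≠ Set.univ ∧
    ∀ C D : Set V, IsComponentOf G S C → IsComponentOf G Sᶜ D → Touches G C D →
      setWeight w D ≤ setWeight w C

def IsConnSafeSet (G : SimpleGraph V) (w : V → ℝ) (S : Set V) : Prop :=
  IsSafeSet G w S ∧ (G.induce S).Connected

noncomputable def safeNumber (G : SimpleGraph V) (w : V → ℝ) : ℝ :=
  sInf (setWeight w '' {S | IsSafeSet G w S})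

noncomputable def connSafeNumber (G : SimpleGraph V) (w : V → ℝ) : ℝ :=
  sInf (setWeight w '' {S | IsConnSafeSet G w S})

def InGcs (G : SimpleGraph V) : Prop :=
  ∀ w : V → ℝ, (∀ v, 0 < w v) → safeNumber G w = connSafeNumber G w

/-- The `m`-book graph `B_m`, the Cartesian product of the star `K_{1,m}` and `P₂`. -/
def bookGraph (m : ℕ) : SimpleGraph ((Fin 1 ⊕ Fin m) × Fin 2) :=
  (completeBipartiteGraph (Fin 1) (Fin m)) □ (pathGraph 2)

/-!
Every safe set `S` of `B_m` can be traded for a connected safe set of no larger weight.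
If `S` contains both hubs it is already connected. If it contains exactly one hub, `hub s`,
then `S` consists of the component `C` of that hub and of isolated vertices `(i, t)` whose
partners `(i, s)` are isolated in `Sᶜ`, so `w (i, s) ≤ w (i, t)`; swapping all these pairs
yields a set `T` such that `T` and `Tᶜ` are connected and both weigh at most `w S`, and the
heavier of the two is safe. If `S` contains no hub, then `Sᶜ` is connected and every column
piece of `S` weighs at least `w Sᶜ`; unless `S` is a single piece, the complement of its
lightest piece works.
-/

section SetWeight

variable {w : V → ℝ} {A B : Set V}

lemma setWeight_eq_sum_toFinset (w : V → ℝ) (A : Set V) :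
    setWeight w A = ∑ v ∈ A.toFinset, w v := by
  rw [setWeight, ← Finset.sum_filter]
  congr 1
  ext
  simp

lemma setWeight_nonneg (hw : ∀ v, 0 ≤ w v) (A : Set V) : 0 ≤ setWeight w A :=
  Finset.sum_nonneg fun v _ => by split_ifs <;> simp [hw v]

lemma setWeight_mono (hw : ∀ v, 0 ≤ w v) (h : A ⊆ B) : setWeight w A ≤ setWeight w B := by
  simp only [setWeight_eq_sum_toFinset]
  exact Finset.sum_le_sum_of_subset_of_nonneg (Set.toFinset_subset_toFinset.mpr h)
    fun v _ _ => hw v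

lemma setWeight_union (h : Disjoint A B) :
    setWeight w (A ∪ B) = setWeight w A + setWeight w B := by
  simp only [setWeight_eq_sum_toFinset, Set.toFinset_union]
  exact Finset.sum_union (Set.disjoint_toFinset.mpr h)

lemma setWeight_add_setWeight_compl (w : V → ℝ) (A : Set V) :
    setWeight w A + setWeight w Aᶜ = setWeight w Set.univ := by
  rw [← setWeight_union disjoint_compl_right, Set.union_compl_self]

lemma setWeight_singleton (w : V → ℝ) (a : V) : setWeight w {a} = w a := by
  simp [setWeight_eq_sum_toFinset]

lemma setWeight_le_setWeight_image {f : V → V} (hf : Set.InjOn f A)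
    (h : ∀ x ∈ A, w x ≤ w (f x)) : setWeight w A ≤ setWeight w (f '' A) := by
  simp only [setWeight_eq_sum_toFinset, Set.toFinset_image]
  rw [Finset.sum_image fun x hx y hy => hf (Set.mem_toFinset.mp hx) (Set.mem_toFinset.mp hy)]
  exact Finset.sum_le_sum fun x hx => h x (Set.mem_toFinset.mp hx)

end SetWeight

section Components

variable {α : Type*} {G : SimpleGraph α} {S C : Set α}

lemma preconnected_induce_of_forall_eq_or_adj
    (h : ∀ x ∈ S, ∀ y ∈ S, x = y ∨ G.Adj x y) : (G.induce S).Preconnected := by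
  rintro ⟨x, hx⟩ ⟨y, hy⟩
  rcases h x hx y hy with rfl | hxy
  · rfl
  · exact Adj.reachable (G := G.induce S) hxy

lemma preconnected_induce_of_forall_near {z : α} (hz : z ∈ S)
    (h : ∀ x ∈ S, x = z ∨ G.Adj x z ∨ ∃ y ∈ S, G.Adj x y ∧ G.Adj y z) :
    (G.induce S).Preconnected := by
  have reach : ∀ x : S, (G.induce S).Reachable x ⟨z, hz⟩ := by
    rintro ⟨x, hx⟩
    rcases h x hx with rfl | hxz | ⟨y, hy, hxy, hyz⟩
    · rfl
    · exact Adj.reachable (G := G.induce S) hxz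
    · exact (Adj.reachable (G := G.induce S) (u := ⟨x, hx⟩) (v := ⟨y, hy⟩) hxy).trans
        (Adj.reachable (G := G.induce S) hyz)
  exact fun x y => (reach x).trans (reach y).symm

lemma mem_of_walk_of_closed (hclosed : ∀ a ∈ C, ∀ b ∈ S, G.Adj a b → b ∈ C)
    {x y : S} (p : (G.induce S).Walk x y) (hy : (y : α) ∈ C) : (x : α) ∈ C := by
  induction p with
  | nil => exact hy
  | cons hadj _ ih => exact hclosed _ (ih hy) _ (Subtype.property _) hadj.symm

lemma isComponentOf_of_closed (hsub : C ⊆ S) (hne : C.Nonempty)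
    (hconn : (G.induce C).Preconnected)
    (hclosed : ∀ a ∈ C, ∀ b ∈ S, G.Adj a b → b ∈ C) : IsComponentOf G S C := by
  obtain ⟨z, hz⟩ := hne
  refine ⟨(G.induce S).connectedComponentMk ⟨z, hsub hz⟩, Set.ext fun y => ⟨fun hy => ?_, ?_⟩⟩
  · refine ⟨⟨y, hsub hy⟩, ConnectedComponent.eq.mpr ?_, rfl⟩
    exact (hconn ⟨y, hy⟩ ⟨z, hz⟩).map (G.induceHomOfLE hsub).toHom
  · rintro ⟨y, hy, rfl⟩
    obtain ⟨p⟩ := ConnectedComponent.eq.mp hy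
    exact mem_of_walk_of_closed hclosed p hz

lemma isComponentOf_self (hne : S.Nonempty) (hconn : (G.induce S).Preconnected) :
    IsComponentOf G S S :=
  isComponentOf_of_closed subset_rfl hne hconn fun _ _ _ hb _ => hb

lemma isComponentOf_singleton {x : α} (hx : x ∈ S) (h : ∀ y ∈ S, ¬G.Adj x y) :
    IsComponentOf G S {x} := by
  refine isComponentOf_of_closed (by simpa) (Set.singleton_nonempty x)
    (preconnected_induce_of_forall_eq_or_adj ?_) ?_
  · simp
  · rintro a rfl b hb hab
    exact absurd hab (h b hb)

lemma IsComponentOf.eq_of_preconnected (hC : IsComponentOf G S C)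
    (hconn : (G.induce S).Preconnected) : C = S := by
  obtain ⟨c, rfl⟩ := hC
  obtain ⟨x, rfl⟩ := c.exists_rep
  refine Set.Subset.antisymm (by simp) fun y hy => ⟨⟨y, hy⟩, ?_, rfl⟩
  exact ConnectedComponent.eq.mpr (hconn _ x)

end Components

section SafeSets

variable {G : SimpleGraph V} {w : V → ℝ} {S T : Set V}

lemma IsSafeSet.isConnSafeSet (hS : IsSafeSet G w S) (hconn : (G.induce S).Preconnected) :
    IsConnSafeSet G w S :=
  ⟨hS, @Connected.mk _ _ hconn hS.1.to_subtype⟩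

lemma isConnSafeSet_of_preconnected_compl (hT : T.Nonempty) (hTc : Tᶜ.Nonempty)
    (hconn : (G.induce T).Preconnected) (hconnc : (G.induce Tᶜ).Preconnected)
    (hle : setWeight w Tᶜ ≤ setWeight w T) : IsConnSafeSet G w T := by
  refine IsSafeSet.isConnSafeSet ⟨hT, fun h => ?_, fun C D hC hD _ => ?_⟩ hconn
  · simp [h] at hTc
  · rwa [hC.eq_of_preconnected hconn, hD.eq_of_preconnected hconnc]

/-- Exchanging `W ⊆ S` for `U ⊆ Sᶜ` gives `T = C ∪ U` with `Tᶜ = D ∪ W`; both weigh at most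
`w S`, and the heavier of the two is safe. -/
lemma exists_connSafeSet_of_exchange {C W D U : Set V} (hS : C ∪ W = S) (hSc : D ∪ U = Sᶜ)
    (hCW : Disjoint C W) (hDU : Disjoint D U) (hC : C.Nonempty) (hD : D.Nonempty)
    (hconnT : (G.induce (C ∪ U)).Preconnected) (hconnTc : (G.induce (D ∪ W)).Preconnected)
    (hDC : setWeight w D ≤ setWeight w C) (hUW : setWeight w U ≤ setWeight w W) :
    ∃ T, IsConnSafeSet G w T ∧ setWeight w T ≤ setWeight w S := by
  have memS (x) : x ∈ C ∨ x ∈ W ↔ x ∈ S := by rw [← hS]; rfl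
  have memSc (x) : x ∈ D ∨ x ∈ U ↔ x ∉ S := by rw [← Set.mem_compl_iff, ← hSc]; rfl
  have hcompl : (C ∪ U)ᶜ = D ∪ W := by
    ext x
    have hxCW : x ∈ C → x ∉ W := fun h => Set.disjoint_left.mp hCW h
    have hxDU : x ∈ D → x ∉ U := fun h => Set.disjoint_left.mp hDU h
    have hxS := memS x
    have hxSc := memSc x
    simp only [Set.mem_compl_iff, Set.mem_union]
    tauto
  have hCU : Disjoint C U :=
    Set.disjoint_left.mpr fun x hC hU => ((memSc x).mp (.inr hU)) ((memS x).mp (.inl hC))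
  have hDW : Disjoint D W :=
    Set.disjoint_left.mpr fun x hD hW => ((memSc x).mp (.inl hD)) ((memS x).mp (.inr hW))
  have hwS : setWeight w S = setWeight w C + setWeight w W := by rw [← hS, setWeight_union hCW]
  have hwT : setWeight w (C ∪ U) ≤ setWeight w S := by rw [hwS, setWeight_union hCU]; linarith
  have hwTc : setWeight w (D ∪ W) ≤ setWeight w S := by rw [hwS, setWeight_union hDW]; linarith
  have hT : (C ∪ U).Nonempty := hC.mono Set.subset_union_left
  have hTc : (D ∪ W).Nonempty := hD.mono Set.subset_union_left
  rcases le_total (setWeight w (D ∪ W)) (setWeight w (C ∪ U)) with hle | hle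
  · refine ⟨C ∪ U, isConnSafeSet_of_preconnected_compl hT ?_ hconnT ?_ ?_, hwT⟩ <;> rwa [hcompl]
  · have hcompl' : (D ∪ W)ᶜ = C ∪ U := by rw [← hcompl, compl_compl]
    refine ⟨D ∪ W, isConnSafeSet_of_preconnected_compl hTc ?_ hconnTc ?_ ?_, hwTc⟩ <;>
      rwa [hcompl']

lemma safeNumber_eq_connSafeNumber_of_forall_exists (hw : ∀ v, 0 ≤ w v)
    (h : ∀ S, IsSafeSet G w S → ∃ T, IsConnSafeSet G w T ∧ setWeight w T ≤ setWeight w S) :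
    safeNumber G w = connSafeNumber G w := by
  unfold safeNumber connSafeNumber
  set A := setWeight w '' {S | IsSafeSet G w S}
  set B := setWeight w '' {S | IsConnSafeSet G w S}
  have hBA : B ⊆ A := Set.image_mono fun S hS => hS.1
  rcases A.eq_empty_or_nonempty with hA | hA
  · rw [hA, Set.subset_empty_iff.mp (hA ▸ hBA : B ⊆ ∅)]
  have hbdd : BddBelow A := ⟨0, by rintro _ ⟨S, -, rfl⟩; exact setWeight_nonneg hw S⟩
  have hB : B.Nonempty := by
    obtain ⟨_, S, hS, rfl⟩ := hA
    obtain ⟨T, hT, -⟩ := h S hS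
    exact ⟨_, T, hT, rfl⟩
  refine le_antisymm (csInf_le_csInf hbdd hB hBA) (le_csInf hA ?_)
  rintro _ ⟨S, hS, rfl⟩
  obtain ⟨T, hT, hle⟩ := h S hS
  exact (csInf_le (hbdd.mono hBA) ⟨T, hT, rfl⟩).trans hle

end SafeSets

namespace Book

variable {m : ℕ}

abbrev hub (a : Fin 2) : (Fin 1 ⊕ Fin m) × Fin 2 := (Sum.inl 0, a)

lemma adj_iff {x y : (Fin 1 ⊕ Fin m) × Fin 2} :
    (bookGraph m).Adj x y ↔
      x.2 = y.2 ∧ (x.1.isLeft ∧ y.1.isRight ∨ x.1.isRight ∧ y.1.isLeft) ∨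
        x.1 = y.1 ∧ x.2 ≠ y.2 := by
  simp [bookGraph, boxProd_adj, pathGraph_two_eq_top, and_comm]

@[simp]
lemma adj_inl_inl {u v : Fin 1} {a b : Fin 2} :
    (bookGraph m).Adj (.inl u, a) (.inl v, b) ↔ a ≠ b := by
  simp [adj_iff, Subsingleton.elim u v]

@[simp]
lemma adj_inl_inr {u : Fin 1} {i : Fin m} {a b : Fin 2} :
    (bookGraph m).Adj (.inl u, a) (.inr i, b) ↔ a = b := by
  simp [adj_iff]

@[simp]
lemma adj_inr_inl {u : Fin 1} {i : Fin m} {a b : Fin 2} :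
    (bookGraph m).Adj (.inr i, a) (.inl u, b) ↔ a = b := by
  simp [adj_iff]

@[simp]
lemma adj_inr_inr {i j : Fin m} {a b : Fin 2} :
    (bookGraph m).Adj (.inr i, a) (.inr j, b) ↔ i = j ∧ a ≠ b := by
  simp [adj_iff]

@[simp]
lemma adj_fst_eq {c : Fin 1 ⊕ Fin m} {a b : Fin 2} :
    (bookGraph m).Adj (c, a) (c, b) ↔ a ≠ b := by
  simp [adj_iff]


variable {s t : Fin 2} {A S : Set ((Fin 1 ⊕ Fin m) × Fin 2)} {w : (Fin 1 ⊕ Fin m) × Fin 2 → ℝ}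

lemma preconnected_of_hub_mem (hst : s ≠ t) (hs : hub s ∈ A)
    (h : ∀ i, (.inr i, t) ∈ A → (.inr i, s) ∈ A ∨ hub t ∈ A) :
    ((bookGraph m).induce A).Preconnected := by
  refine preconnected_induce_of_forall_near hs ?_
  rintro ⟨u | i, a⟩ hx <;> obtain rfl | rfl : a = s ∨ a = t := by omega
  · simp [Subsingleton.elim u 0]
  · simp [hst.symm]
  · simp
  · rcases h i hx with h' | h'
    · exact .inr (.inr ⟨_, h', by simpa using hst.symm, by simp⟩)
    · exact .inr (.inr ⟨_, h', by simp, by simpa using hst.symm⟩)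

lemma preconnected_of_hubs_mem (h0 : hub 0 ∈ A) (h1 : hub 1 ∈ A) :
    ((bookGraph m).induce A).Preconnected :=
  preconnected_of_hub_mem zero_ne_one h0 fun _ _ => .inr h1


/-- If only the hub `hub a` lies in `A`, this is the component of `A` containing it. -/
def anchored (A : Set ((Fin 1 ⊕ Fin m) × Fin 2)) (a : Fin 2) : Set ((Fin 1 ⊕ Fin m) × Fin 2) :=
  {x | x ∈ A ∧ (x.1, a) ∈ A}

def shadow (A : Set ((Fin 1 ⊕ Fin m) × Fin 2)) (a : Fin 2) : Set ((Fin 1 ⊕ Fin m) × Fin 2) :=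
  {x | x ∉ A ∧ (x.1, a) ∈ A}

lemma anchored_union_shadow_compl (A : Set ((Fin 1 ⊕ Fin m) × Fin 2)) (a : Fin 2) :
    anchored A a ∪ shadow Aᶜ a = A := by
  ext x
  simp only [anchored, shadow, Set.mem_union, Set.mem_ofPred_eq, Set.mem_compl_iff, not_not]
  tauto

lemma disjoint_anchored_shadow_compl (A : Set ((Fin 1 ⊕ Fin m) × Fin 2)) (a : Fin 2) :
    Disjoint (anchored A a) (shadow Aᶜ a) :=
  Set.disjoint_left.mpr fun _ hx hx' => hx'.2 hx.2

lemma anchored_isComponentOf (hst : s ≠ t) (hs : hub s ∈ A) (ht : hub t ∉ A) :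
    IsComponentOf (bookGraph m) A (anchored A s) := by
  refine isComponentOf_of_closed (fun _ hx => hx.1) ⟨hub s, hs, hs⟩
    (preconnected_of_hub_mem hst ⟨hs, hs⟩ fun i hi => .inl ⟨hi.2, hi.2⟩) ?_
  rintro ⟨u | i, a⟩ ⟨ha, ha'⟩ ⟨v | j, b⟩ hb hadj <;> refine ⟨hb, ?_⟩
  · simpa [Subsingleton.elim v 0] using hs
  · obtain rfl : a = b := by simpa using hadj
    obtain rfl : a = s := by
      by_contra h
      obtain rfl : a = t := by omega
      exact ht (by simpa [Subsingleton.elim u 0] using ha)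
    exact hb
  · simpa [Subsingleton.elim v 0] using hs
  · obtain ⟨rfl, -⟩ := by simpa using hadj
    exact ha'

lemma preconnected_anchored_union_shadow (hst : s ≠ t) (hs : hub s ∈ A) :
    ((bookGraph m).induce (anchored A s ∪ shadow A t)).Preconnected := by
  refine preconnected_of_hub_mem hst (.inl ⟨hs, hs⟩) ?_
  rintro i (⟨-, hi⟩ | ⟨hi, hi'⟩)
  · exact .inl (.inl ⟨hi, hi⟩)
  · exact absurd hi' hi


lemma isComponentOf_singleton_inr {i : Fin m} (hst : s ≠ t) (hi : (.inr i, t) ∈ A)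
    (hi' : (.inr i, s) ∉ A) (ht : hub t ∉ A) :
    IsComponentOf (bookGraph m) A {(.inr i, t)} := by
  refine isComponentOf_singleton hi ?_
  rintro ⟨v | j, b⟩ hy hadj
  · obtain rfl : t = b := by simpa using hadj
    exact ht (by simpa [Subsingleton.elim v 0] using hy)
  · obtain ⟨rfl, hb⟩ := by simpa using hadj
    obtain rfl : b = s := by omega
    exact hi' hy

lemma exists_eq_inr_of_mem_shadow (hst : s ≠ t) (ht : hub t ∉ A)
    {x : (Fin 1 ⊕ Fin m) × Fin 2} (hx : x ∈ shadow A t) : ∃ i, x = (.inr i, s) := by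
  obtain ⟨hx, hx'⟩ := hx
  obtain ⟨u | i, a⟩ := x
  · exact absurd (by simpa [Subsingleton.elim u 0] using hx') ht
  · obtain rfl : a = s := by
      by_contra h
      obtain rfl : a = t := by omega
      exact hx hx'
    exact ⟨i, rfl⟩

lemma setWeight_shadow_le (hst : s ≠ t) (hw : ∀ v, 0 ≤ w v) (hs : hub s ∈ S) (ht : hub t ∉ S)
    (hS : IsSafeSet (bookGraph m) w S) :
    setWeight w (shadow S t) ≤ setWeight w (shadow Sᶜ s) := by
  have hinj : Set.InjOn (fun x => (x.1, t)) (shadow S t) := by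
    intro x hx y hy hxy
    obtain ⟨i, rfl⟩ := exists_eq_inr_of_mem_shadow hst ht hx
    obtain ⟨j, rfl⟩ := exists_eq_inr_of_mem_shadow hst ht hy
    simpa using hxy
  have hle : ∀ x ∈ shadow S t, w x ≤ w (x.1, t) := by
    intro x hx
    obtain ⟨i, rfl⟩ := exists_eq_inr_of_mem_shadow hst ht hx
    have hsafe := hS.2.2 _ _ (isComponentOf_singleton_inr hst hx.2 hx.1 ht)
      (isComponentOf_singleton_inr (A := Sᶜ) hst.symm hx.1 (not_not.mpr hx.2) (not_not.mpr hs))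
      ⟨_, rfl, _, rfl, by simpa using hst.symm⟩
    simpa only [setWeight_singleton] using hsafe
  calc setWeight w (shadow S t) ≤ setWeight w ((fun x => (x.1, t)) '' shadow S t) :=
        setWeight_le_setWeight_image hinj hle
    _ ≤ setWeight w (shadow Sᶜ s) := by
        refine setWeight_mono hw (Set.image_subset_iff.mpr fun x hx => ?_)
        obtain ⟨i, rfl⟩ := exists_eq_inr_of_mem_shadow hst ht hx
        exact ⟨not_not.mpr hx.2, hx.1⟩


lemma exists_connSafeSet_le_of_hub_mem_of_hub_not_mem (hst : s ≠ t) (hw : ∀ v, 0 ≤ w v)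
    (hs : hub s ∈ S) (ht : hub t ∉ S) (hS : IsSafeSet (bookGraph m) w S) :
    ∃ T, IsConnSafeSet (bookGraph m) w T ∧ setWeight w T ≤ setWeight w S := by
  have hs' : hub s ∉ Sᶜ := not_not.mpr hs
  have hdecomp := anchored_union_shadow_compl Sᶜ t
  have hdisj := disjoint_anchored_shadow_compl Sᶜ t
  rw [compl_compl] at hdecomp hdisj
  refine exists_connSafeSet_of_exchange (anchored_union_shadow_compl S s) hdecomp
    (disjoint_anchored_shadow_compl S s) hdisj ⟨hub s, hs, hs⟩ ⟨hub t, ht, ht⟩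
    (preconnected_anchored_union_shadow hst hs)
    (preconnected_anchored_union_shadow (A := Sᶜ) hst.symm ht) ?_
    (setWeight_shadow_le hst hw hs ht hS)
  exact hS.2.2 _ _ (anchored_isComponentOf hst hs ht)
    (anchored_isComponentOf (A := Sᶜ) hst.symm ht hs')
    ⟨hub s, ⟨hs, hs⟩, hub t, ⟨ht, ht⟩, by simpa using hst⟩


lemma preconnected_sep_fst_eq (A : Set ((Fin 1 ⊕ Fin m) × Fin 2)) (c : Fin 1 ⊕ Fin m) :
    ((bookGraph m).induce {x ∈ A | x.1 = c}).Preconnected := by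
  refine preconnected_induce_of_forall_eq_or_adj ?_
  rintro ⟨c₁, a⟩ ⟨-, h₁⟩ ⟨c₂, b⟩ ⟨-, h₂⟩
  obtain rfl : c₁ = c₂ := h₁.trans h₂.symm
  by_cases hab : a = b
  · exact .inl (by rw [hab])
  · exact .inr (by simpa using hab)

lemma isComponentOf_sep_fst_eq (hhub : ∀ a, hub a ∉ S) {c : Fin 1 ⊕ Fin m}
    (hne : {x ∈ S | x.1 = c}.Nonempty) : IsComponentOf (bookGraph m) S {x ∈ S | x.1 = c} := by
  refine isComponentOf_of_closed (Set.sep_subset _ _) hne (preconnected_sep_fst_eq S c) ?_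
  rintro ⟨u | i, a⟩ ⟨ha, rfl⟩ ⟨v | j, b⟩ hb hadj
  · exact absurd (by simpa [Subsingleton.elim u 0] using ha) (hhub a)
  · exact absurd (by simpa [Subsingleton.elim u 0] using ha) (hhub a)
  · exact absurd (by simpa [Subsingleton.elim v 0] using hb) (hhub b)
  · obtain ⟨rfl, -⟩ := by simpa using hadj
    exact ⟨hb, rfl⟩

lemma adj_hub_of_mem (hhub : ∀ a, hub a ∉ S) {x : (Fin 1 ⊕ Fin m) × Fin 2} (hx : x ∈ S) :
    (bookGraph m).Adj x (hub x.2) := by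
  obtain ⟨u | i, a⟩ := x
  · exact absurd (by simpa [Subsingleton.elim u 0] using hx) (hhub a)
  · simp


/-- `Pᶜ` is connected as it contains both hubs, it is safe as `P` is the lighter piece, and
`w Sᶜ ≤ w P` makes it no heavier than `S`. -/
lemma exists_connSafeSet_le_compl_sep_fst_eq (hw : ∀ v, 0 ≤ w v) (hhub : ∀ a, hub a ∉ S)
    {c c' : Fin 1 ⊕ Fin m} (hcc' : c ≠ c') (hne : {x ∈ S | x.1 = c}.Nonempty)
    (hle : setWeight w {x ∈ S | x.1 = c} ≤ setWeight w {x ∈ S | x.1 = c'})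
    (hSc : setWeight w Sᶜ ≤ setWeight w {x ∈ S | x.1 = c}) :
    ∃ T, IsConnSafeSet (bookGraph m) w T ∧ setWeight w T ≤ setWeight w S := by
  set P := {x ∈ S | x.1 = c}
  have hhubP (a : Fin 2) : hub a ∈ Pᶜ := fun h => hhub a h.1
  refine ⟨Pᶜ, isConnSafeSet_of_preconnected_compl ⟨hub 0, hhubP 0⟩ (by rwa [compl_compl])
    (preconnected_of_hubs_mem (hhubP 0) (hhubP 1)) (by rw [compl_compl]; exact preconnected_sep_fst_eq S c)
    ?_, ?_⟩
  · rw [compl_compl]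
    refine hle.trans (setWeight_mono hw fun x hx hxP => hcc' ?_)
    exact hxP.2.symm.trans hx.2
  · have := setWeight_add_setWeight_compl w P
    have := setWeight_add_setWeight_compl w S
    linarith

lemma exists_connSafeSet_le_of_forall_hub_not_mem (hw : ∀ v, 0 ≤ w v) (hhub : ∀ a, hub a ∉ S)
    (hS : IsSafeSet (bookGraph m) w S) :
    ∃ T, IsConnSafeSet (bookGraph m) w T ∧ setWeight w T ≤ setWeight w S := by
  have hSc {c : Fin 1 ⊕ Fin m} (hne : {x ∈ S | x.1 = c}.Nonempty) :
      setWeight w Sᶜ ≤ setWeight w {x ∈ S | x.1 = c} := by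
    obtain ⟨x, hx⟩ := hne
    refine hS.2.2 _ _ (isComponentOf_sep_fst_eq hhub ⟨x, hx⟩)
      (isComponentOf_self ⟨hub 0, hhub 0⟩ (preconnected_of_hubs_mem (hhub 0) (hhub 1)))
      ⟨x, hx, hub x.2, hhub x.2, adj_hub_of_mem hhub hx.1⟩
  obtain ⟨x, hx⟩ := hS.1
  by_cases hcol : S ⊆ {y ∈ S | y.1 = x.1}
  · refine ⟨S, hS.isConnSafeSet ?_, le_rfl⟩
    rw [Set.Subset.antisymm hcol (Set.sep_subset _ _)]
    exact preconnected_sep_fst_eq S x.1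
  obtain ⟨y, hy, hyx⟩ := Set.not_subset.mp hcol
  have hne (z) (hz : z ∈ S) : {x ∈ S | x.1 = z.1}.Nonempty := ⟨z, hz, rfl⟩
  rcases le_total (setWeight w {z ∈ S | z.1 = x.1}) (setWeight w {z ∈ S | z.1 = y.1}) with h | h
  · exact exists_connSafeSet_le_compl_sep_fst_eq hw hhub (fun h => hyx ⟨hy, h.symm⟩)
      (hne x hx) h (hSc (hne x hx))
  · exact exists_connSafeSet_le_compl_sep_fst_eq hw hhub (fun h => hyx ⟨hy, h⟩)
      (hne y hy) h (hSc (hne y hy))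

lemma exists_connSafeSet_le (hw : ∀ v, 0 ≤ w v) (hS : IsSafeSet (bookGraph m) w S) :
    ∃ T, IsConnSafeSet (bookGraph m) w T ∧ setWeight w T ≤ setWeight w S := by
  by_cases h0 : hub 0 ∈ S <;> by_cases h1 : hub 1 ∈ S
  · exact ⟨S, hS.isConnSafeSet (preconnected_of_hubs_mem h0 h1), le_rfl⟩
  · exact exists_connSafeSet_le_of_hub_mem_of_hub_not_mem zero_ne_one hw h0 h1 hS
  · exact exists_connSafeSet_le_of_hub_mem_of_hub_not_mem one_ne_zero hw h1 h0 hS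
  · refine exists_connSafeSet_le_of_forall_hub_not_mem hw (fun a => ?_) hS
    fin_cases a <;> assumption

end Book

theorem stmt_16_general (m : ℕ) : InGcs (bookGraph m) := fun _ hw =>
  safeNumber_eq_connSafeNumber_of_forall_exists (fun v => (hw v).le)
    fun _ => Book.exists_connSafeSet_le fun v => (hw v).le

theorem stmt_16 (m : ℕ) (hm : 1 ≤ m) : InGcs (bookGraph m) :=
  stmt_16_general m
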